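/- arXiv:1910.10613 — 3 statements merged into one kernel-verified Lean document; each statement's English description precedes it below -/
import Mathlib

section
/- For λ > 0, the 4×4 matrix M_λ with rows (−1, 0, 1/λ, 1/λ), (0, 0, 1/λ, 1/λ), (2, −1, 1, 0), (−1, 1, 0, 0) has eigenvalues −1, 1, −1/√λ, 1/√λ. -/
open Real Matrix

/-! Solving `M v = μ v` with last coordinate `1` forces `v = (μ², μ² + μ, μ, 1)` (for `μ ≠ 1`),
and the four rows then reduce to `(μ + 1)(μ² - 1/λ) = 0`, giving the eigenvalues `-1` and
`±1/√λ`. At `μ = 1` the third coordinate is free and the second row only asks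
`(v₂ + 1)/λ = 2`; clearing `λ` gives the eigenvector `(k, 2k, 2 - k, k)` with `k = 1/λ`. -/

section

variable {R : Type*} [CommRing R]

/-- `M_λ` with `k` in place of `1/λ`. -/
def pontryaginMatrix (k : R) : Matrix (Fin 4) (Fin 4) R :=
  !![-1, 0, k, k; 0, 0, k, k; 2, -1, 1, 0; -1, 1, 0, 0]

theorem pontryaginMatrix_mulVec_of_mul_eq_zero {k μ : R} (h : (μ + 1) * (μ ^ 2 - k) = 0) :
    pontryaginMatrix k *ᵥ ![μ ^ 2, μ ^ 2 + μ, μ, 1] = μ • ![μ ^ 2, μ ^ 2 + μ, μ, 1] := by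
  ext i
  fin_cases i <;> simp [pontryaginMatrix, mulVec, dotProduct, Fin.sum_univ_four]
  · linear_combination -h
  · linear_combination -h
  · ring

theorem pontryaginMatrix_mulVec_one (k : R) :
    pontryaginMatrix k *ᵥ ![k, 2 * k, 2 - k, k] = ![k, 2 * k, 2 - k, k] := by
  ext i
  fin_cases i <;> simp [pontryaginMatrix, mulVec, dotProduct, Fin.sum_univ_four] <;> ring

end

theorem exists_pontryaginMatrix_mulVec_eq_smul {k μ : ℝ} (h : μ = 1 ∨ (μ + 1) * (μ ^ 2 - k) = 0) :
    ∃ v : Fin 4 → ℝ, v ≠ 0 ∧ pontryaginMatrix k *ᵥ v = μ • v := by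
  rcases h with rfl | h
  · refine ⟨_, fun hv => ?_, by rw [one_smul, pontryaginMatrix_mulVec_one]⟩
    have h₀ := congrFun hv 0
    have h₂ := congrFun hv 2
    simp only [Pi.zero_apply, cons_val_zero, cons_val_two, head_cons, tail_cons] at h₀ h₂
    linarith
  · exact ⟨_, fun hv => by simpa using congrFun hv 3, pontryaginMatrix_mulVec_of_mul_eq_zero h⟩

/-- For `λ > 0`, the matrix `M_λ` of the regularized Pontryagin system has
eigenvalues `−1, 1, −1/√λ, 1/√λ`. -/
theorem stmt_15 (l : ℝ) (hl : 0 < l) :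
    let M : Matrix (Fin 4) (Fin 4) ℝ :=
      Matrix.of !![-1, 0, 1 / l, 1 / l;
                    0, 0, 1 / l, 1 / l;
                    2, -1, 1, 0;
                   -1, 1, 0, 0]
    ∀ μ ∈ ({-1, 1, -(1 / Real.sqrt l), 1 / Real.sqrt l} : Set ℝ),
      ∃ v : Fin 4 → ℝ, v ≠ 0 ∧ M.mulVec v = μ • v := by
  intro M μ hμ
  have hsq : (1 / √l) ^ 2 = 1 / l := by rw [div_pow, sq_sqrt hl.le, one_pow]
  refine exists_pontryaginMatrix_mulVec_eq_smul (k := 1 / l) ?_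
  rcases hμ with rfl | rfl | rfl | rfl
  · right; ring
  · left; rfl
  all_goals right; rw [← hsq]; ring
end

section
/- For λ > 0, λ ≠ 1, the vectors (1,0,−1,1), (1,2,2λ−1,1), (1,1−√λ,−√λ,λ), (1,1+√λ,√λ,λ) are eigenvectors of M_λ with eigenvalues −1, 1, −1/√λ, 1/√λ respectively, and they form a basis of ℝ⁴. -/
open Real

/-!
The eigenvector equations are a direct computation using only `√λ * √λ = λ`. Independence
needs no determinant: for `λ > 0`, `λ ≠ 1` the eigenvalues `±1`, `±1/√λ` are pairwise
distinct, and eigenvectors for distinct eigenvalues are linearly independent; four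
independent vectors in `ℝ⁴` span it.
-/

lemma injective_vec_neg_pos_neg_pos {a b : ℝ} (ha : 0 < a) (hb : 0 < b) (hab : a ≠ b) :
    Function.Injective ![-a, a, -b, b] := by
  intro i j h
  fin_cases i <;> fin_cases j <;> simp at h ⊢ <;> grind

lemma linearIndependent_of_mulVec_eq_smul {ι n K : Type*} [Fintype n] [DecidableEq n] [Field K]
    (A : Matrix n n K) (μ : ι → K) (hμ : Function.Injective μ) (v : ι → n → K)
    (hv : ∀ i, v i ≠ 0) (hAv : ∀ i, A.mulVec (v i) = μ i • v i) :
    LinearIndependent K v :=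
  Module.End.eigenvectors_linearIndependent' (Matrix.toLin' A) μ hμ v fun i =>
    ⟨Module.End.mem_eigenspace_iff.mpr (hAv i), hv i⟩

lemma span_eq_top_of_linearIndependent_of_finrank_eq_four {K V : Type*} [Field K]
    [AddCommGroup V] [Module K V] (hV : Module.finrank K V = 4) {v₁ v₂ v₃ v₄ : V}
    (h : LinearIndependent K ![v₁, v₂, v₃, v₄]) :
    Submodule.span K {v₁, v₂, v₃, v₄} = ⊤ := by
  have hrange : Set.range ![v₁, v₂, v₃, v₄] = {v₁, v₂, v₃, v₄} := by
    simp only [Matrix.range_cons, Matrix.range_empty, Set.union_empty, Set.singleton_union]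
  rw [← hrange]
  exact h.span_eq_top_of_card_eq_finrank (by rw [hV, Fintype.card_fin])

noncomputable section

variable (l : ℝ)

def matM : Matrix (Fin 4) (Fin 4) ℝ :=
  !![-1, 0, 1 / l, 1 / l;
      0, 0, 1 / l, 1 / l;
      2, -1, 1, 0;
     -1, 1, 0, 0]

def eigenvectors : Fin 4 → Fin 4 → ℝ :=
  ![![1, 0, -1, 1], ![1, 2, 2 * l - 1, 1], ![1, 1 - √l, -√l, l], ![1, 1 + √l, √l, l]]

def eigenvalues : Fin 4 → ℝ := ![-1, 1, -(1 / √l), 1 / √l]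

lemma eigenvectors_ne_zero (i : Fin 4) : eigenvectors l i ≠ 0 := fun h => by
  have h0 := congrFun h 0
  fin_cases i <;> simp [eigenvectors] at h0

variable {l}

lemma matM_mulVec_eigenvectors (hl : 0 < l) (i : Fin 4) :
    (matM l).mulVec (eigenvectors l i) = eigenvalues l i • eigenvectors l i := by
  have hs : √l ≠ 0 := (sqrt_pos.mpr hl).ne'
  have hsq : √l * √l = l := mul_self_sqrt hl.le
  funext j
  fin_cases i <;> fin_cases j <;>
    simp [matM, eigenvectors, eigenvalues] <;>
    field_simp <;> grind

lemma injective_eigenvalues (hl : 0 < l) (hl1 : l ≠ 1) : Function.Injective (eigenvalues l) := by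
  have hs : √l ≠ 1 := fun h => hl1 (by rw [← sq_sqrt hl.le, h, one_pow])
  exact injective_vec_neg_pos_neg_pos one_pos (by positivity)
    (by rwa [ne_eq, eq_div_iff (sqrt_pos.mpr hl).ne', one_mul])

end

/-- For `λ > 0`, `λ ≠ 1`, the vectors `(1,0,−1,1)`, `(1,2,2λ−1,1)`,
`(1,1−√λ,−√λ,λ)`, `(1,1+√λ,√λ,λ)` are eigenvectors of `M_λ` with eigenvalues
`−1, 1, −1/√λ, 1/√λ`, and they form a basis of `ℝ⁴`. -/
theorem stmt_16 (l : ℝ) (hl : 0 < l) (hl1 : l ≠ 1) :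
    let M : Matrix (Fin 4) (Fin 4) ℝ :=
      Matrix.of !![-1, 0, 1 / l, 1 / l;
                    0, 0, 1 / l, 1 / l;
                    2, -1, 1, 0;
                   -1, 1, 0, 0]
    let v₁ : Fin 4 → ℝ := ![1, 0, -1, 1]
    let v₂ : Fin 4 → ℝ := ![1, 2, 2 * l - 1, 1]
    let v₃ : Fin 4 → ℝ := ![1, 1 - Real.sqrt l, -Real.sqrt l, l]
    let v₄ : Fin 4 → ℝ := ![1, 1 + Real.sqrt l, Real.sqrt l, l]
    M.mulVec v₁ = (-1 : ℝ) • v₁ ∧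
    M.mulVec v₂ = (1 : ℝ) • v₂ ∧
    M.mulVec v₃ = (-(1 / Real.sqrt l)) • v₃ ∧
    M.mulVec v₄ = (1 / Real.sqrt l) • v₄ ∧
    LinearIndependent ℝ ![v₁, v₂, v₃, v₄] ∧
    Submodule.span ℝ {v₁, v₂, v₃, v₄} = ⊤ := by
  intro M v₁ v₂ v₃ v₄
  have hind : LinearIndependent ℝ ![v₁, v₂, v₃, v₄] :=
    linearIndependent_of_mulVec_eq_smul (matM l) (eigenvalues l) (injective_eigenvalues hl hl1)
      (eigenvectors l) (eigenvectors_ne_zero l) (matM_mulVec_eigenvectors hl)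
  exact ⟨matM_mulVec_eigenvectors hl 0, matM_mulVec_eigenvectors hl 1,
    matM_mulVec_eigenvectors hl 2, matM_mulVec_eigenvectors hl 3, hind,
    span_eq_top_of_linearIndependent_of_finrank_eq_four (Module.finrank_fin_fun ℝ) hind⟩
end

section
/- Under the singular conditions for the n-th order problem—namely p_n + p_{n−1} = 0 on a nontrivial interval with adjoint dynamics ṗ_k = −p_{k−1} + (−1)^{k+1}(2x₁ − z₀) for 1 ≤ k ≤ n−1, ṗ_n = p_n + (−1)^{n+1}(2x₁ − z₀), ṗ₀ = z₀ − x₁, and state dynamics ż_k = z_{k+1}, ż_{n−1} = v, ẋ_n = v − x_n—the singular control satisfies z₀ = z₁ = ⋯ = z_{n−1} = v, and the singular trajectories are x_n(t) = Y e^{−t} + Z sinh(t), z₀(t) = ⋯ = z_{n−1}(t) = v(t) = Z eᵗ for constants Y, Z. -/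
open Real Finset

/-!
Once `p n + p (n - 1) = 0`, the adjoint equation for `p n` has the same shape as those for
`p k`, `k < n`, and then `(p k + p (k - 1))' = -(p (k - 1) + p (k - 2))`; so the sums
`p k + p (k - 1)` vanish all the way down to `k = 1`, and `(p 1 + p 0)' = x₁ - p 0` forces
`p 0 = x₁`. Differentiating once more, `z 0 = x₁ + x₁'`, and the alternating sum defining `x₁`
telescopes to `z 1` (to `v` if `n = 1`). Differentiating `z k = z (k + 1)` propagates the equality
up the chain to `v`, so `z 0' = z 0`, and `xn - Z sinh` solves `y' = -y`.
-/

theorem Set.EqOn.hasDerivAt_eqOn {s : Set ℝ} {f g f' g' : ℝ → ℝ} (h : Set.EqOn f g s)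
    (hs : IsOpen s) (hf : ∀ t ∈ s, HasDerivAt f (f' t) t) (hg : ∀ t ∈ s, HasDerivAt g (g' t) t) :
    Set.EqOn f' g' s := fun t ht =>
  (hf t ht).unique <| (hg t ht).congr_of_eventuallyEq <|
    Filter.eventuallyEq_of_mem (hs.mem_nhds ht) fun _ hu => h hu

theorem exists_eq_mul_exp_of_hasDerivAt_mul_self {s : Set ℝ} {f : ℝ → ℝ} {c : ℝ}
    (hs : IsOpen s) (hs' : IsPreconnected s) (hf : ∀ t ∈ s, HasDerivAt f (c * f t) t) :
    ∃ C, ∀ t ∈ s, f t = C * exp (c * t) := by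
  have hg : ∀ t ∈ s, HasDerivAt (fun u => f u * exp (-c * u)) 0 t := fun t ht =>
    ((hf t ht).mul ((hasDerivAt_id' t).const_mul (-c)).exp).congr_deriv (by ring)
  obtain ⟨C, hC⟩ := hs.exists_is_const_of_deriv_eq_zero hs'
    (fun t ht => (hg t ht).differentiableAt.differentiableWithinAt)
    (fun t ht => (hg t ht).deriv)
  refine ⟨C, fun t ht => ?_⟩
  rw [← hC t ht, mul_assoc, ← exp_add, neg_mul, neg_add_cancel, exp_zero, mul_one]

theorem sum_Icc_neg_one_pow_mul_add_succ (a : ℕ → ℝ) (m : ℕ) :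
    ∑ k ∈ Icc 1 m, (-1 : ℝ) ^ (k + 1) * (a (k + 1) + a k) = a 1 + (-1) ^ (m + 1) * a (m + 1) := by
  induction m with
  | zero => simp
  | succ m ih =>
    rw [sum_Icc_succ_top (by omega), ih]
    ring

theorem hasDerivAt_alternating_sum_sub {a : ℕ → ℝ → ℝ} {b : ℝ → ℝ} {t : ℝ} {n : ℕ} (hn : 1 ≤ n)
    (ha : ∀ k ∈ Icc 1 (n - 1), HasDerivAt (a k) (a (k + 1) t) t)
    (hb : HasDerivAt b (a n t - b t) t) :
    HasDerivAt (fun u => ∑ k ∈ Icc 1 (n - 1), (-1 : ℝ) ^ (k + 1) * a k u - (-1) ^ n * b u)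
      (a 1 t - (∑ k ∈ Icc 1 (n - 1), (-1 : ℝ) ^ (k + 1) * a k t - (-1) ^ n * b t)) t := by
  obtain ⟨m, rfl⟩ : ∃ m, n = m + 1 := ⟨n - 1, by omega⟩
  rw [Nat.add_sub_cancel] at ha ⊢
  refine ((HasDerivAt.fun_sum fun k hk => (ha k hk).const_mul ((-1 : ℝ) ^ (k + 1))).sub
    (hb.const_mul ((-1 : ℝ) ^ (m + 1)))).congr_deriv ?_
  have := sum_Icc_neg_one_pow_mul_add_succ (a · t) m
  simp only [mul_add, sum_add_distrib] at this
  linear_combination this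

theorem add_pred_eq_zero_of_hasDerivAt {s : Set ℝ} {p : ℕ → ℝ → ℝ} {w : ℝ → ℝ} {N : ℕ}
    (hs : IsOpen s)
    (hp : ∀ k, 1 ≤ k → k ≤ N → ∀ t ∈ s,
      HasDerivAt (p k) (-p (k - 1) t + (-1 : ℝ) ^ (k + 1) * w t) t)
    (hN : Set.EqOn (fun t => p N t + p (N - 1) t) 0 s) :
    ∀ k, 1 ≤ k → k ≤ N → Set.EqOn (fun t => p k t + p (k - 1) t) 0 s := by
  intro k hk hkN
  induction hkN using Nat.decreasingInduction with
  | self => exact hN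
  | of_succ k hkN ih =>
    have hderiv := (ih (by omega)).hasDerivAt_eqOn hs
      (fun t ht => (hp (k + 1) (by omega) hkN t ht).add (hp k hk hkN.le t ht))
      (fun t _ => hasDerivAt_const t 0)
    intro t ht
    have := hderiv ht
    simp only [Nat.add_sub_cancel, pow_succ, Pi.zero_apply] at this ⊢
    linarith

theorem eqOn_index_zero_of_hasDerivAt_succ {s : Set ℝ} {f : ℕ → ℝ → ℝ} {n : ℕ} (hs : IsOpen s)
    (hf : ∀ k < n, ∀ t ∈ s, HasDerivAt (f k) (f (k + 1) t) t) (h01 : Set.EqOn (f 0) (f 1) s) :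
    ∀ k ≤ n, Set.EqOn (f k) (f 0) s := by
  suffices hsucc : ∀ k < n, Set.EqOn (f k) (f (k + 1)) s by
    intro k hk
    induction k with
    | zero => exact Set.eqOn_refl _ _
    | succ k ih => exact (hsucc k hk).symm.trans (ih (by omega))
  intro k hk
  induction k with
  | zero => exact h01
  | succ k ih => exact (ih (by omega)).hasDerivAt_eqOn hs (hf k (by omega)) (hf (k + 1) hk)

theorem adjoint_zero_eqOn_of_add_pred_eq_zero {s : Set ℝ} {p : ℕ → ℝ → ℝ} {x y : ℝ → ℝ} {N : ℕ}
    (hs : IsOpen s) (hN : 1 ≤ N)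
    (hp : ∀ k, 1 ≤ k → k ≤ N → ∀ t ∈ s,
      HasDerivAt (p k) (-p (k - 1) t + (-1 : ℝ) ^ (k + 1) * (2 * x t - y t)) t)
    (hp0 : ∀ t ∈ s, HasDerivAt (p 0) (y t - x t) t)
    (hsing : Set.EqOn (fun t => p N t + p (N - 1) t) 0 s) :
    Set.EqOn (p 0) x s := by
  have h10 := add_pred_eq_zero_of_hasDerivAt hs hp hsing 1 le_rfl hN
  have hderiv := h10.hasDerivAt_eqOn hs
    (fun t ht => (hp 1 le_rfl hN t ht).add (hp0 t ht)) (fun t _ => hasDerivAt_const t 0)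
  intro t ht
  have h := hderiv ht
  norm_num at h
  linarith

/-- The chain `u, u', …, u⁽ⁿ⁻¹⁾` of the paper, continued by the control `v = u⁽ⁿ⁾`. -/
def stateWithControl (n : ℕ) (z : ℕ → ℝ → ℝ) (v : ℝ → ℝ) (k : ℕ) : ℝ → ℝ :=
  if k < n then z k else v

theorem stateWithControl_of_lt {n k : ℕ} {z : ℕ → ℝ → ℝ} {v : ℝ → ℝ} (hk : k < n) :
    stateWithControl n z v k = z k :=
  if_pos hk

theorem stateWithControl_self (n : ℕ) (z : ℕ → ℝ → ℝ) (v : ℝ → ℝ) :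
    stateWithControl n z v n = v :=
  if_neg (lt_irrefl n)

theorem hasDerivAt_stateWithControl {s : Set ℝ} {n : ℕ} {z : ℕ → ℝ → ℝ} {v : ℝ → ℝ}
    (hztop : ∀ t ∈ s, HasDerivAt (z (n - 1)) (v t) t)
    (hz : ∀ k, k < n - 1 → ∀ t ∈ s, HasDerivAt (z k) (z (k + 1) t) t) :
    ∀ k < n, ∀ t ∈ s, HasDerivAt (stateWithControl n z v k)
      (stateWithControl n z v (k + 1) t) t := by
  intro k hk t ht
  rw [stateWithControl_of_lt hk]
  rcases (Nat.succ_le_of_lt hk).lt_or_eq with hk1 | hk1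
  · rw [stateWithControl_of_lt hk1]
    exact hz k (by omega) t ht
  · obtain rfl : n = k + 1 := hk1.symm
    rw [stateWithControl_self]
    simpa using hztop t ht

theorem stmt_19_general (n : ℕ) (hn : 1 ≤ n) (t₀ t₁ : ℝ)
    (xn v : ℝ → ℝ) (z p : ℕ → ℝ → ℝ) (x₁ : ℝ → ℝ)
    (hx₁ : ∀ t, x₁ t =
      (∑ k ∈ Finset.Icc 1 (n - 1), (-1 : ℝ) ^ (k + 1) * z k t) - (-1 : ℝ) ^ n * xn t)
    (hxn : ∀ t ∈ Set.Ioo t₀ t₁, HasDerivAt xn (v t - xn t) t)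
    (hztop : ∀ t ∈ Set.Ioo t₀ t₁, HasDerivAt (z (n - 1)) (v t) t)
    (hz : ∀ k, k < n - 1 → ∀ t ∈ Set.Ioo t₀ t₁, HasDerivAt (z k) (z (k + 1) t) t)
    (hpn : ∀ t ∈ Set.Ioo t₀ t₁,
      HasDerivAt (p n) (p n t + (-1 : ℝ) ^ (n + 1) * (2 * x₁ t - z 0 t)) t)
    (hpk : ∀ k, 1 ≤ k → k ≤ n - 1 → ∀ t ∈ Set.Ioo t₀ t₁,
      HasDerivAt (p k) (-p (k - 1) t + (-1 : ℝ) ^ (k + 1) * (2 * x₁ t - z 0 t)) t)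
    (hp0 : ∀ t ∈ Set.Ioo t₀ t₁, HasDerivAt (p 0) (z 0 t - x₁ t) t)
    (hsing : ∀ t ∈ Set.Ioo t₀ t₁, p n t + p (n - 1) t = 0) :
    ∃ Y Z : ℝ, ∀ t ∈ Set.Ioo t₀ t₁,
      (∀ k < n, z k t = Z * Real.exp t) ∧
      v t = Z * Real.exp t ∧
      xn t = Y * Real.exp (-t) + Z * Real.sinh t := by
  have hp : ∀ k, 1 ≤ k → k ≤ n → ∀ t ∈ Set.Ioo t₀ t₁,
      HasDerivAt (p k) (-p (k - 1) t + (-1 : ℝ) ^ (k + 1) * (2 * x₁ t - z 0 t)) t := by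
    intro k hk hkn t ht
    rcases hkn.lt_or_eq with hkn | rfl
    · exact hpk k hk (by omega) t ht
    · exact (hpn t ht).congr_deriv (by linarith [hsing t ht])
  have hp0x := adjoint_zero_eqOn_of_add_pred_eq_zero isOpen_Ioo hn hp hp0 hsing
  set ζ := stateWithControl n z v
  have hζz : ∀ k < n, ζ k = z k := fun k hk => stateWithControl_of_lt hk
  have hζv : ζ n = v := stateWithControl_self n z v
  have hζ : ∀ k < n, ∀ t ∈ Set.Ioo t₀ t₁, HasDerivAt (ζ k) (ζ (k + 1) t) t :=
    hasDerivAt_stateWithControl hztop hz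
  have hx₁' : ∀ t ∈ Set.Ioo t₀ t₁, HasDerivAt x₁ (ζ 1 t - x₁ t) t := by
    intro t ht
    have hx₁ζ : x₁ = fun u =>
        ∑ k ∈ Icc 1 (n - 1), (-1 : ℝ) ^ (k + 1) * ζ k u - (-1) ^ n * xn u := by
      funext u
      rw [hx₁ u]
      congr 1
      refine sum_congr rfl fun k hk => ?_
      rw [hζz k (by simp at hk; omega)]
    rw [hx₁ζ]
    exact hasDerivAt_alternating_sum_sub hn (fun k hk => hζ k (by simp at hk; omega) t ht)
      (by rw [hζv]; exact hxn t ht)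
  have h01 : Set.EqOn (ζ 0) (ζ 1) (Set.Ioo t₀ t₁) := by
    intro t ht
    have := hp0x.hasDerivAt_eqOn isOpen_Ioo hp0 hx₁' ht
    rw [hζz 0 hn]
    linarith
  have hchain := eqOn_index_zero_of_hasDerivAt_succ isOpen_Ioo hζ h01
  obtain ⟨Z, hZ⟩ := exists_eq_mul_exp_of_hasDerivAt_mul_self (c := 1) isOpen_Ioo
    isPreconnected_Ioo fun t ht => (hζ 0 hn t ht).congr_deriv (by rw [one_mul, hchain 1 hn ht])
  have hv : ∀ t ∈ Set.Ioo t₀ t₁, v t = Z * exp t := fun t ht => by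
    rw [← hζv, hchain n le_rfl ht, hZ t ht, one_mul]
  obtain ⟨Y, hY⟩ := exists_eq_mul_exp_of_hasDerivAt_mul_self (c := -1) isOpen_Ioo
    isPreconnected_Ioo fun t ht => ((hxn t ht).fun_sub ((hasDerivAt_sinh t).const_mul Z)).congr_deriv
      (by rw [hv t ht, ← cosh_add_sinh]; ring)
  refine ⟨Y, Z, fun t ht => ⟨fun k hk => ?_, hv t ht, ?_⟩⟩
  · rw [← hζz k hk, hchain k hk.le ht, hZ t ht, one_mul]
  · rw [← neg_one_mul t, ← hY t ht]
    ring

/-- Singular extremals of the `n`-th order problem: if `p_n + p_{n−1} = 0` on a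
nontrivial interval, with the stated adjoint and state dynamics (where
`x₁ = z₁ − z₂ + ⋯ + (−1)ⁿ z_{n−1} − (−1)ⁿ x_n`), then the singular control satisfies
`z₀ = z₁ = ⋯ = z_{n−1} = v = Z eᵗ` and `x_n(t) = Y e^{−t} + Z sinh t`. -/
theorem stmt_19 (n : ℕ) (hn : 1 ≤ n) (t₀ t₁ : ℝ) (ht : t₀ < t₁)
    (xn v : ℝ → ℝ) (z p : ℕ → ℝ → ℝ) (x₁ : ℝ → ℝ)
    (hx₁ : ∀ t, x₁ t =
      (∑ k ∈ Finset.Icc 1 (n - 1), (-1 : ℝ) ^ (k + 1) * z k t) - (-1 : ℝ) ^ n * xn t)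
    (hxn : ∀ t ∈ Set.Ioo t₀ t₁, HasDerivAt xn (v t - xn t) t)
    (hztop : ∀ t ∈ Set.Ioo t₀ t₁, HasDerivAt (z (n - 1)) (v t) t)
    (hz : ∀ k, k < n - 1 → ∀ t ∈ Set.Ioo t₀ t₁, HasDerivAt (z k) (z (k + 1) t) t)
    (hpn : ∀ t ∈ Set.Ioo t₀ t₁,
      HasDerivAt (p n) (p n t + (-1 : ℝ) ^ (n + 1) * (2 * x₁ t - z 0 t)) t)
    (hpk : ∀ k, 1 ≤ k → k ≤ n - 1 → ∀ t ∈ Set.Ioo t₀ t₁,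
      HasDerivAt (p k) (-p (k - 1) t + (-1 : ℝ) ^ (k + 1) * (2 * x₁ t - z 0 t)) t)
    (hp0 : ∀ t ∈ Set.Ioo t₀ t₁, HasDerivAt (p 0) (z 0 t - x₁ t) t)
    (hsing : ∀ t ∈ Set.Ioo t₀ t₁, p n t + p (n - 1) t = 0) :
    ∃ Y Z : ℝ, ∀ t ∈ Set.Ioo t₀ t₁,
      (∀ k < n, z k t = Z * Real.exp t) ∧
      v t = Z * Real.exp t ∧
      xn t = Y * Real.exp (-t) + Z * Real.sinh t :=
  stmt_19_general n hn t₀ t₁ xn v z p x₁ hx₁ hxn hztop hz hpn hpk hp0 hsing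
end
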